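/- arXiv:2508.18473 — 5 statements merged into one kernel-verified Lean document; each statement's English description precedes it below -/
import Mathlib

section
/- If a test score T is exchangeable with calibration scores S_1,...,S_n (all i.i.d. from a continuous distribution), then the conformal p-value Q = (1 + |{i : S_i ≥ T}|)/(n+1) satisfies P(Q ≤ t) ≤ t for all t ∈ [0,1], i.e., Q is super-uniform (a valid p-value). -/
open MeasureTheory ProbabilityTheory Finset
open scoped ENNReal

/-!
The score vector `(S 1, …, S n, T)` has an exchangeable law without ties. Hence the rank of `T`,
i.e. the number of scores strictly above it, is uniform on `{0, …, n}`: the `n + 1` events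
"coordinate `m` has rank `j`" are disjoint and equally likely. Since `Q ≤ t` forces this rank
below `⌊t (n + 1)⌋`, the event has probability at most `⌊t (n + 1)⌋ / (n + 1) ≤ t`.
-/

theorem ProbabilityTheory.IndepFun.measure_setOf_eq_eq_zero {Ω β : Type*} [MeasurableSpace Ω]
    {μ : Measure Ω} [IsFiniteMeasure μ] [MeasurableSpace β] [MeasurableEq β]
    {f g : Ω → β} (hfg : IndepFun f g μ) (hf : Measurable f) (hg : Measurable g)
    [NullSingletonClass (μ.map f)] :
    μ {ω | f ω = g ω} = 0 := by
  have hdiag : MeasurableSet {p : β × β | p.1 = p.2} := measurableSet_diagonal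
  have hmap : μ.map (fun ω => (f ω, g ω)) = (μ.map f).prod (μ.map g) :=
    (indepFun_iff_map_prod_eq_prod_map_map hf.aemeasurable hg.aemeasurable).mp hfg
  calc μ {ω | f ω = g ω} = (μ.map f).prod (μ.map g) {p | p.1 = p.2} := by
        rw [← hmap, Measure.map_apply (hf.prodMk hg) hdiag]; rfl
    _ = ∫⁻ b, μ.map f {b} ∂μ.map g := by
        rw [Measure.prod_apply_symm hdiag]; rfl
    _ = 0 := by simp

section Exchangeable

variable {ι α : Type*} [MeasurableSpace α]

def Exchangeable (π : Measure (ι → α)) : Prop :=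
  ∀ σ : Equiv.Perm ι, MeasurePreserving (fun x : ι → α => x ∘ σ) π π

theorem exchangeable_pi [Fintype ι] (ν : Measure α) [SigmaFinite ν] :
    Exchangeable (Measure.pi fun _ : ι => ν) := by
  intro σ
  convert measurePreserving_piCongrLeft (fun _ : ι => ν) σ.symm using 1
  ext x i
  simpa using (MeasurableEquiv.piCongrLeft_apply_apply (β := fun _ : ι => α) σ.symm x (σ i)).symm

theorem ae_injective_pi [Fintype ι] [MeasurableEq α] (ν : Measure α) [IsProbabilityMeasure ν]
    [NullSingletonClass ν] : ∀ᵐ x ∂(Measure.pi fun _ : ι => ν), Function.Injective x := by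
  have hindep := iIndepFun_pi (μ := fun _ : ι => ν) (X := fun _ a => a) fun _ => aemeasurable_id
  simp only [ae_all_iff, Function.Injective]
  intro i j
  by_cases hij : i = j
  · exact Filter.Eventually.of_forall fun _ _ => hij
  · have : NullSingletonClass ((Measure.pi fun _ : ι => ν).map fun x => x i) := by
      rw [(measurePreserving_eval _ i).map_eq]; infer_instance
    have hnull := (hindep.indepFun hij).measure_setOf_eq_eq_zero
      (measurable_pi_apply i) (measurable_pi_apply j)
    filter_upwards [measure_eq_zero_iff_ae_notMem.mp hnull] with x hx hxij
    exact absurd hxij hx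

end Exchangeable

section Rank

variable {ι : Type*} [Fintype ι]

noncomputable def numAbove (x : ι → ℝ) (m : ι) : ℕ := #{i | x m < x i}

theorem measurable_numAbove (m : ι) : Measurable fun x : ι → ℝ => numAbove x m := by
  simp_rw [numAbove, card_filter]
  exact Finset.measurable_sum _ fun i _ => Measurable.ite
    (measurableSet_lt (measurable_pi_apply m) (measurable_pi_apply i)) measurable_const
    measurable_const

theorem numAbove_comp_perm (x : ι → ℝ) (σ : Equiv.Perm ι) (m : ι) :
    numAbove (x ∘ σ) m = numAbove x (σ m) :=
  card_equiv σ fun i => by simp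

theorem numAbove_lt_numAbove {x : ι → ℝ} {m m' : ι} (h : x m < x m') :
    numAbove x m' < numAbove x m := by
  refine card_lt_card ⟨fun i hi => ?_, fun hsub => ?_⟩
  · simp only [mem_filter, mem_univ, true_and] at hi ⊢
    exact h.trans hi
  · simpa using hsub (by simpa using h : m' ∈ _)

theorem numAbove_injective {x : ι → ℝ} (hx : Function.Injective x) :
    Function.Injective (numAbove x) := by
  intro m m' h
  by_contra hne
  rcases (hx.ne hne).lt_or_gt with hlt | hlt
  · exact (numAbove_lt_numAbove hlt).ne h.symm
  · exact (numAbove_lt_numAbove hlt).ne h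

variable {π : Measure (ι → ℝ)}

theorem card_mul_measure_numAbove_eq_le (hπ : Exchangeable π)
    (hinj : ∀ᵐ x ∂π, Function.Injective x) (m : ι) (j : ℕ) :
    Fintype.card ι * π {x | numAbove x m = j} ≤ π Set.univ := by
  classical
  set A : ι → Set (ι → ℝ) := fun m => {x | numAbove x m = j}
  have hA : ∀ m, MeasurableSet (A m) := fun m => measurable_numAbove m (measurableSet_singleton j)
  have hequal : ∀ m', π (A m') = π (A m) := by
    intro m'
    have hpre : (fun x => x ∘ Equiv.swap m m') ⁻¹' A m = A m' := by
      ext x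
      simp [A, numAbove_comp_perm]
    rw [← hpre, (hπ _).measure_preimage (hA m).nullMeasurableSet]
  have hdisj : Pairwise (Function.onFun (AEDisjoint π) A) := by
    intro m₁ m₂ hne
    refine measure_mono_null (fun x hx => ?_) (ae_iff.mp hinj)
    exact fun hx' => hne (numAbove_injective hx' (hx.1.trans hx.2.symm))
  calc Fintype.card ι * π (A m) = ∑ m', π (A m') := by simp [hequal]
    _ = π (⋃ m', A m') := by
        rw [measure_iUnion₀ hdisj fun m' => (hA m').nullMeasurableSet, tsum_fintype]
    _ ≤ π Set.univ := measure_mono (Set.subset_univ _)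

theorem card_mul_measure_numAbove_lt_le (hπ : Exchangeable π)
    (hinj : ∀ᵐ x ∂π, Function.Injective x) (m : ι) (k : ℕ) :
    Fintype.card ι * π {x | numAbove x m < k} ≤ k * π Set.univ := by
  have hunion : {x | numAbove x m < k} = ⋃ j ∈ range k, {x | numAbove x m = j} := by
    ext x
    simp
  calc Fintype.card ι * π {x | numAbove x m < k}
      ≤ Fintype.card ι * ∑ j ∈ range k, π {x | numAbove x m = j} := by
        rw [hunion]
        gcongr
        exact measure_biUnion_finset_le _ _
    _ = ∑ j ∈ range k, Fintype.card ι * π {x | numAbove x m = j} := mul_sum _ _ _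
    _ ≤ ∑ j ∈ range k, π Set.univ :=
        sum_le_sum fun j _ => card_mul_measure_numAbove_eq_le hπ hinj m j
    _ = k * π Set.univ := by simp

theorem numAbove_last_le {n : ℕ} (x : Fin (n + 1) → ℝ) :
    numAbove x (Fin.last n) ≤ #{i : Fin n | x (Fin.last n) ≤ x i.castSucc} := by
  rw [numAbove, Fin.univ_castSuccEmb, filter_cons_of_neg (p := (x (Fin.last n) < x ·)) _ _ _
    (lt_irrefl _), filter_map, card_map]
  exact card_le_card (monotone_filter_right _ fun _ _ => le_of_lt)

end Rank

/-- If a test score `T` is exchangeable with calibration scores `S 1, ..., S n`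
(all i.i.d. from a continuous, i.e. atomless, distribution `ν`), then the conformal p-value
`Q = (1 + #{i : S i ≥ T}) / (n+1)` is super-uniform: `P(Q ≤ t) ≤ t` for all `t ∈ [0,1]`. -/
theorem conformal_p_value_super_uniform
    {Ω : Type*} [MeasurableSpace Ω] (μ : Measure Ω) [IsProbabilityMeasure μ]
    (n : ℕ) (X : Fin (n + 1) → Ω → ℝ) (ν : Measure ℝ) [IsProbabilityMeasure ν] [NullSingletonClass ν]
    (hmeas : ∀ i, Measurable (X i))
    (hiid : iIndepFun X μ)
    (hlaw : ∀ i, Measure.map (X i) μ = ν)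
    (S : Fin n → Ω → ℝ) (T : Ω → ℝ)
    (hS : ∀ i : Fin n, S i = X i.castSucc) (hT : T = X (Fin.last n))
    (Q : Ω → ℝ)
    (hQ : ∀ ω, Q ω = (1 + ((univ.filter fun i : Fin n => T ω ≤ S i ω).card : ℝ)) / (n + 1)) :
    ∀ t ∈ Set.Icc (0 : ℝ) 1, μ {ω | Q ω ≤ t} ≤ ENNReal.ofReal t := by
  rintro t ⟨ht0, -⟩
  set V : Ω → Fin (n + 1) → ℝ := fun ω i => X i ω
  have hV : Measurable V := measurable_pi_lambda _ hmeas
  have hlawV : μ.map V = Measure.pi fun _ => ν := by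
    simpa [hlaw] using hiid.map_fun_eq_pi_map fun i => (hmeas i).aemeasurable
  set k := ⌊t * (n + 1)⌋₊
  have hsub : {ω | Q ω ≤ t} ⊆ V ⁻¹' {x | numAbove x (Fin.last n) < k} := by
    intro ω hω
    have hQt : 1 + (#{i : Fin n | V ω (Fin.last n) ≤ V ω i.castSucc} : ℝ) ≤ t * (n + 1) := by
      rw [← div_le_iff₀ (by positivity)]
      simpa [hQ, hS, hT, V] using hω
    have hrank : ((numAbove (V ω) (Fin.last n) + 1 : ℕ) : ℝ) ≤ t * (n + 1) := by
      push_cast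
      linarith [(Nat.cast_le (α := ℝ)).mpr (numAbove_last_le (V ω))]
    exact Nat.le_floor hrank
  have hk : (k : ℝ≥0∞) ≤ (n + 1) * ENNReal.ofReal t :=
    calc (k : ℝ≥0∞) = ENNReal.ofReal k := (ENNReal.ofReal_natCast k).symm
      _ ≤ ENNReal.ofReal ((n + 1) * t) :=
          ENNReal.ofReal_le_ofReal (mul_comm t _ ▸ Nat.floor_le (by positivity))
      _ = (n + 1) * ENNReal.ofReal t := by
          rw [ENNReal.ofReal_mul (by positivity)]
          norm_cast
  refine (ENNReal.mul_le_mul_iff_right (a := n + 1) (by simp) (by simp)).mp ?_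
  calc (n + 1) * μ {ω | Q ω ≤ t}
      ≤ Fintype.card (Fin (n + 1)) *
          (Measure.pi fun _ => ν) {x | numAbove x (Fin.last n) < k} := by
        rw [Fintype.card_fin, Nat.cast_add_one, ← hlawV,
          Measure.map_apply hV (measurableSet_lt (measurable_numAbove _) measurable_const)]
        gcongr
    _ ≤ k * (Measure.pi fun _ => ν) Set.univ :=
        card_mul_measure_numAbove_lt_le (exchangeable_pi ν) (ae_injective_pi ν) _ k
    _ ≤ (n + 1) * ENNReal.ofReal t := by simpa using hk
end

section
/- Suppose Q^1,...,Q^K are (possibly dependent) valid p-values, i.e., P(Q^j ≤ t) ≤ t for all t ∈ [0,1] and each j. Let Q^{(1)} ≤ ... ≤ Q^{(K)} denote their order statistics. Then the probability that there exists j with Q^{(j)} ≤ (α/(H_K)) · (j/K), where H_K = Σ_{i=1}^K 1/i, is at most α. That is, the BH-style global null test controls the false alarm rate at level α under arbitrary dependence. -/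
/-! Benjamini–Yekutieli argument. Put `c = α / (H K)`. If the `j`-th order statistic (counting from
`0`) is at most `c (j + 1)`, then at least `j + 1` of the p-values are at most `c (j + 1)`, and
each of them has score at least `1 / (j + 1)`, where the score of `q` is `1 / (k + 1)` for the
least `k` with `q ≤ c (k + 1)`. Hence the rejection event lies in `{1 ≤ ∑ᵢ score (Qᵢ)}`, and
Markov's inequality bounds its probability by `∑ᵢ 𝔼 score (Qᵢ)`, whatever the dependence. Abel
summation writes the score as `∑ₘ wₘ 1{q ≤ c (m + 1)}` with `wₘ ≥ 0` and `∑ₘ wₘ (m + 1) = H`,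
so super-uniformity gives `𝔼 score (Qᵢ) ≤ c H = α / K`. -/

open MeasureTheory Finset

/-- The `j`-th order statistic (smallest is `j = 0`) of the finite family `q : Fin K → ℝ`. -/
noncomputable def orderStat {K : ℕ} (q : Fin K → ℝ) (j : Fin K) : ℝ :=
  ((Multiset.map q Finset.univ.val).sort (· ≤ ·)).get
    ⟨j, by simp⟩

open scoped ENNReal

theorem succ_le_card_filter_of_orderStat_le {K : ℕ} {q : Fin K → ℝ} {j : Fin K} {t : ℝ}
    (h : orderStat q j ≤ t) : (j : ℕ) + 1 ≤ #{i | q i ≤ t} := by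
  set L := (Multiset.map q univ.val).sort (· ≤ ·)
  have hj : (j : ℕ) < L.length := by simp [L]
  have hcard : #{i | q i ≤ t} = L.countP (· ≤ t) := by
    rw [← Multiset.coe_countP, Multiset.sort_eq, Multiset.countP_map]
    rfl
  have htake : ∀ x ∈ L.take (j + 1), decide (x ≤ t) := by
    intro x hx
    obtain ⟨n, hn, rfl⟩ := List.mem_iff_getElem.mp hx
    rw [List.length_take] at hn
    have hnL : n < L.length := by omega
    rw [List.getElem_take, decide_eq_true_eq]
    exact ((Multiset.pairwise_sort _ _).rel_get_of_le
      (a := ⟨n, hnL⟩) (b := ⟨j, hj⟩) (Fin.mk_le_mk.mpr (by omega))).trans h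
  calc (j : ℕ) + 1 = (L.take (j + 1)).length := by simp; omega
    _ = (L.take (j + 1)).countP (· ≤ t) := (List.countP_eq_length.mpr htake).symm
    _ ≤ L.countP (· ≤ t) := (List.take_sublist _ _).countP_le
    _ = #{i | q i ≤ t} := hcard.symm

noncomputable def invSuccUpTo (K m : ℕ) : ℝ := if m < K then 1 / (m + 1) else 0

noncomputable def abelWeight (K m : ℕ) : ℝ := invSuccUpTo K m - invSuccUpTo K (m + 1)

theorem antitone_invSuccUpTo (K : ℕ) : Antitone (invSuccUpTo K) := by
  refine antitone_nat_of_succ_le fun m => ?_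
  unfold invSuccUpTo
  split_ifs <;> first | omega | positivity | gcongr; linarith

theorem abelWeight_nonneg (K m : ℕ) : 0 ≤ abelWeight K m :=
  sub_nonneg.mpr (antitone_invSuccUpTo K m.le_succ)

theorem sum_Ico_abelWeight {K j : ℕ} (hj : j < K) :
    ∑ m ∈ Ico j K, abelWeight K m = 1 / (j + 1) := by
  rw [sum_Ico_eq_sum_range]
  refine (sum_range_sub' (fun m => invSuccUpTo K (j + m)) _).trans ?_
  rw [add_zero, Nat.add_sub_cancel' hj.le]
  simp [invSuccUpTo, hj]

theorem sum_abelWeight_mul_succ (K : ℕ) :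
    ∑ m ∈ range K, abelWeight K m * (m + 1) = ∑ j ∈ range K, (1 : ℝ) / (j + 1) := by
  calc ∑ m ∈ range K, abelWeight K m * (m + 1)
      = ∑ m ∈ Ico 0 K, ∑ _j ∈ Ico 0 (m + 1), abelWeight K m := by
        simp only [← range_eq_Ico, sum_const, card_range, nsmul_eq_mul, Nat.cast_succ, mul_comm]
    _ = ∑ j ∈ Ico 0 K, ∑ m ∈ Ico j K, abelWeight K m :=
        (sum_Ico_Ico_comm 0 K fun _ m => abelWeight K m).symm
    _ = ∑ j ∈ range K, (1 : ℝ) / (j + 1) := by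
        rw [range_eq_Ico]
        exact sum_congr rfl fun j hj => sum_Ico_abelWeight (mem_Ico.mp hj).2

noncomputable def abelScore (K : ℕ) (t : ℕ → ℝ) (q : ℝ) : ℝ≥0∞ :=
  ∑ m ∈ range K, ENNReal.ofReal (abelWeight K m) * (Set.Iic (t m)).indicator 1 q

theorem measurable_abelScore (K : ℕ) (t : ℕ → ℝ) : Measurable (abelScore K t) :=
  Finset.measurable_sum _ fun _ _ => (measurable_one.indicator measurableSet_Iic).const_mul _

theorem inv_succ_le_abelScore {K j : ℕ} {t : ℕ → ℝ} (ht : Monotone t) (hj : j < K) {q : ℝ}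
    (hq : q ≤ t j) : ((j : ℝ≥0∞) + 1)⁻¹ ≤ abelScore K t q := by
  calc ((j : ℝ≥0∞) + 1)⁻¹ = ∑ m ∈ Ico j K, ENNReal.ofReal (abelWeight K m) := by
        rw [← ENNReal.ofReal_sum_of_nonneg fun m _ => abelWeight_nonneg K m,
          sum_Ico_abelWeight hj, one_div, ENNReal.ofReal_inv_of_pos (by positivity)]
        norm_cast
    _ = ∑ m ∈ Ico j K, ENNReal.ofReal (abelWeight K m) * (Set.Iic (t m)).indicator 1 q := by
        refine sum_congr rfl fun m hm => ?_
        rw [Set.indicator_of_mem (show q ∈ Set.Iic (t m) from hq.trans (ht (mem_Ico.mp hm).1)),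
          Pi.one_apply, mul_one]
    _ ≤ abelScore K t q :=
        sum_le_sum_of_subset fun m hm => mem_range.mpr (mem_Ico.mp hm).2

theorem one_le_sum_abelScore_of_orderStat_le {K : ℕ} {t : ℕ → ℝ} (ht : Monotone t)
    {q : Fin K → ℝ} {j : Fin K} (h : orderStat q j ≤ t j) : 1 ≤ ∑ i, abelScore K t (q i) := by
  calc (1 : ℝ≥0∞) = (((j : ℕ) + 1 : ℕ) : ℝ≥0∞) * ((j : ℝ≥0∞) + 1)⁻¹ := by
        push_cast
        exact (ENNReal.mul_inv_cancel (by simp) (by simp)).symm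
    _ ≤ #{i | q i ≤ t j} * ((j : ℝ≥0∞) + 1)⁻¹ := by
        gcongr
        exact succ_le_card_filter_of_orderStat_le h
    _ = ∑ i with q i ≤ t j, ((j : ℝ≥0∞) + 1)⁻¹ := by rw [sum_const, nsmul_eq_mul]
    _ ≤ ∑ i with q i ≤ t j, abelScore K t (q i) :=
        sum_le_sum fun i hi => inv_succ_le_abelScore ht j.isLt (mem_filter.mp hi).2
    _ ≤ ∑ i, abelScore K t (q i) := sum_le_sum_of_subset (filter_subset _ _)

def SuperUniform {Ω : Type*} [MeasurableSpace Ω] (μ : Measure Ω) (Q : Ω → ℝ) : Prop :=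
  ∀ t ∈ Set.Icc (0 : ℝ) 1, μ {ω | Q ω ≤ t} ≤ ENNReal.ofReal t

namespace SuperUniform

variable {Ω : Type*} [MeasurableSpace Ω] {μ : Measure Ω} {Q : Ω → ℝ}

theorem lintegral_sum_mul_indicator_le (hsu : SuperUniform μ Q) (hQ : Measurable Q)
    {ι : Type*} (s : Finset ι) (a : ι → ℝ≥0∞) {t : ι → ℝ} (ht : ∀ m ∈ s, t m ∈ Set.Icc 0 1) :
    ∫⁻ ω, ∑ m ∈ s, a m * (Set.Iic (t m)).indicator 1 (Q ω) ∂μ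
      ≤ ∑ m ∈ s, a m * ENNReal.ofReal (t m) := by
  have hind : ∀ m, Measurable fun ω => (Set.Iic (t m)).indicator (1 : ℝ → ℝ≥0∞) (Q ω) :=
    fun m => (measurable_one.indicator measurableSet_Iic).comp hQ
  rw [lintegral_finsetSum _ fun m _ => (hind m).const_mul _]
  refine sum_le_sum fun m hm => ?_
  rw [lintegral_const_mul _ (hind m)]
  gcongr
  calc ∫⁻ ω, (Set.Iic (t m)).indicator 1 (Q ω) ∂μ = μ {ω | Q ω ≤ t m} := by
        simp_rw [← Set.indicator_comp_right]
        exact lintegral_indicator_one (hQ measurableSet_Iic)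
    _ ≤ ENNReal.ofReal (t m) := hsu _ (ht m hm)

theorem lintegral_abelScore_le (hsu : SuperUniform μ Q) (hQ : Measurable Q) {K : ℕ} {c : ℝ}
    (hc : 0 ≤ c) (hcK : c * K ≤ 1) :
    ∫⁻ ω, abelScore K (fun m => c * (m + 1)) (Q ω) ∂μ
      ≤ ENNReal.ofReal (c * ∑ j ∈ range K, (1 : ℝ) / (j + 1)) := by
  have ht : ∀ m ∈ range K, c * ((m : ℝ) + 1) ∈ Set.Icc 0 1 := fun m hm =>
    ⟨by positivity, hcK.trans' (by gcongr; exact_mod_cast mem_range.mp hm)⟩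
  refine (hsu.lintegral_sum_mul_indicator_le hQ _ _ ht).trans_eq ?_
  rw [← sum_abelWeight_mul_succ, mul_sum, ENNReal.ofReal_sum_of_nonneg fun m _ =>
    mul_nonneg hc (mul_nonneg (abelWeight_nonneg K m) (by positivity))]
  refine sum_congr rfl fun m _ => ?_
  rw [← ENNReal.ofReal_mul (abelWeight_nonneg K m)]
  congr 1
  ring

end SuperUniform

theorem BH_global_null_false_alarm_general
    {Ω : Type*} [MeasurableSpace Ω] (μ : Measure Ω)
    (K : ℕ) (hK : 0 < K) (Q : Fin K → Ω → ℝ)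
    (hmeas : ∀ j, Measurable (Q j))
    (hvalid : ∀ j, ∀ t ∈ Set.Icc (0 : ℝ) 1, μ {ω | Q j ω ≤ t} ≤ ENNReal.ofReal t)
    (α : ℝ) (hα : α ∈ Set.Ioo (0 : ℝ) 1)
    (H : ℝ) (hH : H = ∑ i ∈ Finset.range K, (1 : ℝ) / (i + 1)) :
    μ {ω | ∃ j : Fin K, orderStat (fun i => Q i ω) j ≤ (α / H) * (((j : ℕ) + 1) / K)}
      ≤ ENNReal.ofReal α := by
  obtain ⟨hα0, hα1⟩ := hα
  have hK0 : (0 : ℝ) < K := Nat.cast_pos.mpr hK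
  have hH1 : 1 ≤ H := by
    simpa [hH] using single_le_sum (f := fun i : ℕ => (1 : ℝ) / (i + 1))
      (fun i _ => by positivity) (mem_range.mpr hK)
  set c := α / (H * K) with hc_def
  have hc : 0 ≤ c := by positivity
  have hcK : c * K ≤ 1 := calc
    c * K = α / H := by rw [hc_def]; field_simp
    _ ≤ 1 := (div_le_self hα0.le hH1).trans hα1.le
  have hscore := measurable_abelScore K fun m => c * (m + 1)
  calc μ {ω | ∃ j : Fin K, orderStat (fun i => Q i ω) j ≤ (α / H) * (((j : ℕ) + 1) / K)}
      ≤ μ {ω | 1 ≤ ∑ i, abelScore K (fun m => c * (m + 1)) (Q i ω)} :=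
        measure_mono fun ω ⟨j, hj⟩ => one_le_sum_abelScore_of_orderStat_le
          (fun a b hab => by gcongr) (hj.trans_eq (by ring))
    _ ≤ ∫⁻ ω, ∑ i, abelScore K (fun m => c * (m + 1)) (Q i ω) ∂μ := by
        simpa using mul_meas_ge_le_lintegral₀
          (Finset.measurable_sum _ fun i _ => hscore.comp (hmeas i)).aemeasurable 1
    _ = ∑ i, ∫⁻ ω, abelScore K (fun m => c * (m + 1)) (Q i ω) ∂μ :=
        lintegral_finsetSum _ fun i _ => hscore.comp (hmeas i)
    _ ≤ ∑ _i : Fin K, ENNReal.ofReal (c * H) :=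
        sum_le_sum fun i _ => hH ▸ SuperUniform.lintegral_abelScore_le (hvalid i) (hmeas i) hc hcK
    _ = ENNReal.ofReal α := by
        rw [sum_const, card_univ, Fintype.card_fin, nsmul_eq_mul, ← ENNReal.ofReal_natCast,
          ← ENNReal.ofReal_mul hK0.le, hc_def]
        congr 1
        field_simp

/-- If `Q 1, ..., Q K` are (possibly dependent) valid p-values, then the BH-style
global null test rejecting when some order statistic `Q⁽ʲ⁾ ≤ (α / H_K) · (j / K)`
(`H_K` the `K`-th harmonic number) has false alarm probability at most `α`. -/
theorem BH_global_null_false_alarm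
    {Ω : Type*} [MeasurableSpace Ω] (μ : Measure Ω) [IsProbabilityMeasure μ]
    (K : ℕ) (hK : 0 < K) (Q : Fin K → Ω → ℝ)
    (hmeas : ∀ j, Measurable (Q j))
    (h01 : ∀ j ω, Q j ω ∈ Set.Icc (0 : ℝ) 1)
    (hvalid : ∀ j, ∀ t ∈ Set.Icc (0 : ℝ) 1, μ {ω | Q j ω ≤ t} ≤ ENNReal.ofReal t)
    (α : ℝ) (hα : α ∈ Set.Ioo (0 : ℝ) 1)
    (H : ℝ) (hH : H = ∑ i ∈ Finset.range K, (1 : ℝ) / (i + 1)) :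
    μ {ω | ∃ j : Fin K, orderStat (fun i => Q i ω) j ≤ (α / H) * (((j : ℕ) + 1) / K)}
      ≤ ENNReal.ofReal α :=
  BH_global_null_false_alarm_general μ K hK Q hmeas hvalid α hα H hH
end

section
/- Let Q^1,...,Q^K each satisfy P(Q^j ≤ t) ≤ (1+ε)t for all t ∈ [0,1] (approximately super-uniform). Then the probability that some order statistic Q^{(j)} is at most (α/((1+ε)H_K)) · (j/K) is at most α. -/
/-!
Put `c = α / ((1 + ε) H_K)`, `t j = c (j + 1) / K`, and let `g` be the step function equal to
`1 / (j + 1)` on `(t (j - 1), t j]` and to `0` beyond `t (K - 1)`. If `Q⁽ʲ⁾ ≤ t j`, at least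
`j + 1` of the `Q i` lie below `t j`, each with `g (Q i) ≥ 1 / (j + 1)`, so the rejection event
is contained in `{1 ≤ ∑ i, g (Q i)}`. By Markov's inequality its probability is at most
`∑ i, E[g (Q i)]`. As a nonnegative combination of the indicators of `(-∞, t j]`, `g` has
expectation a combination of the values `P(Q i ≤ t j) ≤ (1 + ε) t j`, and the weights telescope
so that this bound is `(1 + ε) c H_K / K = α / K`.
-/

open MeasureTheory Finset

theorem List.Pairwise.getElem_le_iff_lt_countP {α : Type*} [LinearOrder α] {L : List α}
    (hL : L.Pairwise (· ≤ ·)) {j : ℕ} (hj : j < L.length) (t : α) :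
    L[j] ≤ t ↔ j < L.countP (· ≤ t) := by
  have hmono := hL.sortedLE
  constructor
  · intro h
    calc j < (L.take (j + 1)).length := by simp; omega
      _ = (L.take (j + 1)).countP (· ≤ t) := by
        refine (List.countP_eq_length.2 fun x hx => ?_).symm
        obtain ⟨i, hi, rfl⟩ := List.mem_iff_getElem.1 hx
        simp only [List.length_take, List.getElem_take, decide_eq_true_eq] at hi ⊢
        exact (hmono.getElem_le_getElem_of_le (by omega)).trans h
      _ ≤ L.countP (· ≤ t) := (L.take_sublist _).countP_le
  · intro h
    by_contra! hlt
    have hdrop : (L.drop j).countP (· ≤ t) = 0 := by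
      refine List.countP_eq_zero.2 fun x hx => ?_
      obtain ⟨i, hi, rfl⟩ := List.mem_iff_getElem.1 hx
      simp only [List.getElem_drop, decide_eq_true_eq, not_le]
      exact hlt.trans_le (hmono.getElem_le_getElem_of_le (by omega))
    have htake : (L.take j).countP (· ≤ t) ≤ j :=
      List.countP_le_length.trans (List.length_take_le _ _)
    rw [← L.take_append_drop j, List.countP_append] at h
    omega

theorem orderStat_le_iff {K : ℕ} (q : Fin K → ℝ) (j : Fin K) (t : ℝ) :
    orderStat q j ≤ t ↔ (j : ℕ) < #{i | q i ≤ t} := by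
  rw [orderStat, List.get_eq_getElem, (Multiset.pairwise_sort _ _).getElem_le_iff_lt_countP,
    ← Multiset.coe_countP, Multiset.sort_eq, Multiset.countP_map]
  rfl

noncomputable section

section Reshaping

variable (K : ℕ)

def truncInvSucc (j : ℕ) : ℝ := if j < K then 1 / (j + 1) else 0

def reshapingWeight (j : ℕ) : ℝ := truncInvSucc K j - truncInvSucc K (j + 1)

/-- For monotone `t`, the step function equal to `1 / (j + 1)` on `(t (j - 1), t j]` (`j < K`) and
to `0` above `t (K - 1)`; the indicator form makes its expectation linear in the distribution
function. -/
def reshaping (t : ℕ → ℝ) (x : ℝ) : ℝ :=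
  ∑ j ∈ range K, reshapingWeight K j * (Set.Iic (t j)).indicator 1 x

variable {K}

theorem truncInvSucc_antitone : Antitone (truncInvSucc K) := by
  intro a b hab
  unfold truncInvSucc
  split_ifs with hb ha ha
  · gcongr
  · omega
  · positivity
  · rfl

theorem reshapingWeight_nonneg (j : ℕ) : 0 ≤ reshapingWeight K j :=
  sub_nonneg.2 (truncInvSucc_antitone j.le_succ)

theorem sum_Ico_reshapingWeight {k : ℕ} (hk : k ≤ K) :
    ∑ j ∈ Ico k K, reshapingWeight K j = truncInvSucc K k := by
  have htel := Finset.sum_Ico_sub (truncInvSucc K) hk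
  have hK : truncInvSucc K K = 0 := if_neg (lt_irrefl K)
  rw [Finset.sum_sub_distrib] at htel
  simp only [reshapingWeight, Finset.sum_sub_distrib]
  linarith

theorem sum_range_succ_mul_reshapingWeight :
    ∑ j ∈ range K, ((j : ℝ) + 1) * reshapingWeight K j
      = ∑ k ∈ range K, 1 / ((k : ℝ) + 1) := by
  calc ∑ j ∈ range K, ((j : ℝ) + 1) * reshapingWeight K j
      = ∑ j ∈ range K, ∑ _k ∈ range (j + 1), reshapingWeight K j := by simp
    _ = ∑ k ∈ range K, truncInvSucc K k := by
        simp only [Finset.range_eq_Ico]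
        rw [← Finset.sum_Ico_Ico_comm]
        exact Finset.sum_congr rfl fun k hk => sum_Ico_reshapingWeight (Finset.mem_Ico.1 hk).2.le
    _ = _ := Finset.sum_congr rfl fun k hk => if_pos (Finset.mem_range.1 hk)

theorem reshaping_nonneg (t : ℕ → ℝ) (x : ℝ) : 0 ≤ reshaping K t x :=
  Finset.sum_nonneg fun j _ =>
    mul_nonneg (reshapingWeight_nonneg j) (Set.indicator_nonneg (fun _ _ => zero_le_one) x)

theorem inv_succ_le_reshaping {t : ℕ → ℝ} (ht : Monotone t) {k : ℕ} (hk : k < K) {x : ℝ}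
    (hx : x ≤ t k) : 1 / ((k : ℝ) + 1) ≤ reshaping K t x := by
  calc 1 / ((k : ℝ) + 1)
      = ∑ j ∈ Ico k K, reshapingWeight K j * (Set.Iic (t j)).indicator 1 x := by
        rw [show 1 / ((k : ℝ) + 1) = truncInvSucc K k from (if_pos hk).symm,
          ← sum_Ico_reshapingWeight hk.le]
        refine Finset.sum_congr rfl fun j hj => ?_
        have hxj : x ∈ Set.Iic (t j) := hx.trans (ht (Finset.mem_Ico.1 hj).1)
        rw [Set.indicator_of_mem hxj, Pi.one_apply, mul_one]
    _ ≤ reshaping K t x :=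
        Finset.sum_le_sum_of_subset_of_nonneg
          (fun j hj => Finset.mem_range.2 (Finset.mem_Ico.1 hj).2) fun j _ _ =>
          mul_nonneg (reshapingWeight_nonneg j) (Set.indicator_nonneg (fun _ _ => zero_le_one) x)

theorem one_le_sum_reshaping_of_lt_card {ι : Type*} [Fintype ι] (q : ι → ℝ) {t : ℕ → ℝ}
    (ht : Monotone t) {k : ℕ} (hk : k < K) (hcard : k < #{i | q i ≤ t k}) :
    1 ≤ ∑ i, reshaping K t (q i) := by
  have hk1 : (0 : ℝ) < k + 1 := by positivity
  calc (1 : ℝ) ≤ #{i | q i ≤ t k} * (1 / ((k : ℝ) + 1)) := by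
        rw [mul_one_div, le_div_iff₀ hk1, one_mul]
        exact_mod_cast hcard
    _ = ∑ i with q i ≤ t k, 1 / ((k : ℝ) + 1) := by rw [Finset.sum_const, nsmul_eq_mul]
    _ ≤ ∑ i with q i ≤ t k, reshaping K t (q i) :=
        Finset.sum_le_sum fun i hi => inv_succ_le_reshaping ht hk (Finset.mem_filter.1 hi).2
    _ ≤ ∑ i, reshaping K t (q i) :=
        Finset.sum_le_sum_of_subset_of_nonneg (Finset.filter_subset _ _) fun i _ _ =>
          reshaping_nonneg t (q i)

theorem reshaping_comp_apply {Ω : Type*} (t : ℕ → ℝ) (X : Ω → ℝ) (ω : Ω) :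
    reshaping K t (X ω)
      = ∑ j ∈ range K, reshapingWeight K j * (X ⁻¹' Set.Iic (t j)).indicator 1 ω :=
  rfl

section Integral

variable {Ω : Type*} [MeasurableSpace Ω] {μ : Measure Ω} [IsFiniteMeasure μ] {X : Ω → ℝ}

theorem integrable_reshaping_comp (t : ℕ → ℝ) (hX : Measurable X) :
    Integrable (fun ω => reshaping K t (X ω)) μ := by
  simp only [reshaping_comp_apply]
  exact integrable_finsetSum _ fun j _ =>
    ((integrable_const (1 : ℝ)).indicator (hX measurableSet_Iic)).const_mul _

theorem integral_reshaping_comp (t : ℕ → ℝ) (hX : Measurable X) :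
    ∫ ω, reshaping K t (X ω) ∂μ
      = ∑ j ∈ range K, reshapingWeight K j * μ.real (X ⁻¹' Set.Iic (t j)) := by
  simp only [reshaping_comp_apply]
  rw [integral_finsetSum]
  · simp only [integral_const_mul, integral_indicator_one (hX measurableSet_Iic)]
  · exact fun j _ => ((integrable_const (1 : ℝ)).indicator (hX measurableSet_Iic)).const_mul _

theorem integral_reshaping_comp_le (t : ℕ → ℝ) (hX : Measurable X) {C : ℝ}
    (hC : ∀ j < K, μ.real (X ⁻¹' Set.Iic (t j)) ≤ C * (j + 1)) :
    ∫ ω, reshaping K t (X ω) ∂μ ≤ C * ∑ k ∈ range K, 1 / ((k : ℝ) + 1) := by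
  rw [integral_reshaping_comp t hX, ← sum_range_succ_mul_reshapingWeight, Finset.mul_sum]
  refine Finset.sum_le_sum fun j hj => ?_
  calc reshapingWeight K j * μ.real (X ⁻¹' Set.Iic (t j))
      ≤ reshapingWeight K j * (C * (j + 1)) :=
        mul_le_mul_of_nonneg_left (hC j (Finset.mem_range.1 hj)) (reshapingWeight_nonneg j)
    _ = C * ((j + 1) * reshapingWeight K j) := by ring

theorem measureReal_one_le_sum_reshaping_le {ι : Type*} [Fintype ι] {X : ι → Ω → ℝ}
    (hX : ∀ i, Measurable (X i)) (t : ℕ → ℝ) {C : ℝ}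
    (hC : ∀ i, ∀ j < K, μ.real (X i ⁻¹' Set.Iic (t j)) ≤ C * (j + 1)) :
    μ.real {ω | 1 ≤ ∑ i, reshaping K t (X i ω)}
      ≤ Fintype.card ι * (C * ∑ k ∈ range K, 1 / ((k : ℝ) + 1)) := by
  have hint (i : ι) : Integrable (fun ω => reshaping K t (X i ω)) μ :=
    integrable_reshaping_comp t (hX i)
  have hmarkov := mul_meas_ge_le_integral_of_nonneg (f := fun ω => ∑ i, reshaping K t (X i ω))
    (ae_of_all μ fun ω => Finset.sum_nonneg fun i _ => reshaping_nonneg t (X i ω))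
    (integrable_finsetSum _ fun i _ => hint i) 1
  rw [one_mul, integral_finsetSum _ fun i _ => hint i] at hmarkov
  calc _ ≤ _ := hmarkov
    _ ≤ ∑ _i : ι, C * ∑ k ∈ range K, 1 / ((k : ℝ) + 1) :=
        Finset.sum_le_sum fun i _ => integral_reshaping_comp_le t (hX i) (hC i)
    _ = _ := by rw [Finset.sum_const, Finset.card_univ, nsmul_eq_mul]

end Integral

end Reshaping
end

theorem one_le_sum_range_one_div_succ {K : ℕ} (hK : 0 < K) :
    1 ≤ ∑ i ∈ range K, 1 / ((i : ℝ) + 1) := by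
  simpa using Finset.single_le_sum (f := fun i : ℕ => 1 / ((i : ℝ) + 1))
    (fun i _ => by positivity) (Finset.mem_range.2 hK)

theorem BH_global_null_false_alarm_approx_general
    {Ω : Type*} [MeasurableSpace Ω] (μ : Measure Ω) [IsProbabilityMeasure μ]
    (K : ℕ) (hK : 0 < K) (Q : Fin K → Ω → ℝ)
    (hmeas : ∀ j, Measurable (Q j))
    (ε : ℝ) (hε : 0 < ε)
    (hvalid : ∀ j, ∀ t ∈ Set.Icc (0 : ℝ) 1, μ {ω | Q j ω ≤ t} ≤ ENNReal.ofReal ((1 + ε) * t))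
    (α : ℝ) (hα : α ∈ Set.Ioo (0 : ℝ) 1)
    (H : ℝ) (hH : H = ∑ i ∈ Finset.range K, (1 : ℝ) / (i + 1)) :
    μ {ω | ∃ j : Fin K, orderStat (fun i => Q i ω) j ≤ (α / ((1 + ε) * H)) * (((j : ℕ) + 1) / K)}
      ≤ ENNReal.ofReal α := by
  obtain ⟨hα0, hα1⟩ := hα
  set c := α / ((1 + ε) * H)
  set t : ℕ → ℝ := fun j => c * ((j + 1) / K)
  have hH1 : 1 ≤ H := hH ▸ one_le_sum_range_one_div_succ hK
  have hc1 : c ≤ 1 := by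
    rw [div_le_one (by positivity)]
    nlinarith
  have ht : Monotone t := fun j k hjk => by dsimp only [t]; gcongr
  have hcdf (i : Fin K) (j : ℕ) (hj : j < K) :
      μ.real (Q i ⁻¹' Set.Iic (t j)) ≤ (1 + ε) * c / K * (j + 1) := by
    have hjK : ((j : ℝ) + 1) / K ≤ 1 := by
      rw [div_le_one (by positivity)]
      exact_mod_cast hj
    have htj : t j ∈ Set.Icc (0 : ℝ) 1 :=
      ⟨by positivity, mul_le_one₀ hc1 (by positivity) hjK⟩
    calc μ.real (Q i ⁻¹' Set.Iic (t j)) ≤ (1 + ε) * t j :=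
          ENNReal.toReal_le_of_le_ofReal (by positivity) (hvalid i (t j) htj)
      _ = _ := by ring
  have hrej : {ω | ∃ j : Fin K, orderStat (fun i => Q i ω) j ≤ t j}
      ⊆ {ω | 1 ≤ ∑ i, reshaping K t (Q i ω)} := fun ω ⟨j, hj⟩ =>
    one_le_sum_reshaping_of_lt_card _ ht j.isLt ((orderStat_le_iff _ _ _).1 hj)
  calc μ {ω | ∃ j : Fin K, orderStat (fun i => Q i ω) j ≤ t j}
      ≤ ENNReal.ofReal (μ.real {ω | 1 ≤ ∑ i, reshaping K t (Q i ω)}) := by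
        rw [ofReal_measureReal]
        exact measure_mono hrej
    _ ≤ ENNReal.ofReal α := by
        refine ENNReal.ofReal_le_ofReal
          ((measureReal_one_le_sum_reshaping_le hmeas t hcdf).trans_eq ?_)
        rw [Fintype.card_fin, ← hH]
        simp only [c]
        field_simp

/-- If each `Q j` is approximately super-uniform, `P(Q j ≤ t) ≤ (1+ε)t`, then the BH-style
test rejecting when some order statistic `Q⁽ʲ⁾ ≤ (α / ((1+ε) H_K)) · (j / K)`
(`H_K` the `K`-th harmonic number) has false alarm probability at most `α`. -/
theorem BH_global_null_false_alarm_approx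
    {Ω : Type*} [MeasurableSpace Ω] (μ : Measure Ω) [IsProbabilityMeasure μ]
    (K : ℕ) (hK : 0 < K) (Q : Fin K → Ω → ℝ)
    (hmeas : ∀ j, Measurable (Q j))
    (h01 : ∀ j ω, Q j ω ∈ Set.Icc (0 : ℝ) 1)
    (ε : ℝ) (hε : 0 < ε)
    (hvalid : ∀ j, ∀ t ∈ Set.Icc (0 : ℝ) 1, μ {ω | Q j ω ≤ t} ≤ ENNReal.ofReal ((1 + ε) * t))
    (α : ℝ) (hα : α ∈ Set.Ioo (0 : ℝ) 1)
    (H : ℝ) (hH : H = ∑ i ∈ Finset.range K, (1 : ℝ) / (i + 1)) :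
    μ {ω | ∃ j : Fin K, orderStat (fun i => Q i ω) j ≤ (α / ((1 + ε) * H)) * (((j : ℕ) + 1) / K)}
      ≤ ENNReal.ofReal α :=
  BH_global_null_false_alarm_approx_general μ K hK Q hmeas ε hε hvalid α hα H hH
end

section
/- If S_1,...,S_n, T are exchangeable random variables (not necessarily continuous), the conformal p-value Q = (1 + #{i : S_i ≥ T})/(n+1) satisfies P(Q ≤ t) ≤ t for all t ∈ [0,1]. -/
open MeasureTheory Finset
open scoped ENNReal

/-! Write `upperRank v j` for the number of coordinates of `v` that are `≥ v j`, so that the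
p-value is `upperRank (S, T) T / (n + 1)`. For any vector, at most `k` coordinates have upper rank
`≤ k`: all of them lie at or above the smallest one. By exchangeability each of the `n + 1`
coordinates has the same probability `p` of having upper rank `≤ k`, so `(n + 1) p ≤ k`. This count is
indifferent to ties, so no continuity is needed. Taking `k = ⌊t (n + 1)⌋` gives
`P(Q ≤ t) ≤ t`. -/

def upperRank {ι α : Type*} [Fintype ι] [LE α] [DecidableLE α] (v : ι → α) (j : ι) : ℕ :=
  #{i | v j ≤ v i}

section Rank

variable {ι α : Type*} [Fintype ι] [LinearOrder α]

theorem card_upperRank_le_le (v : ι → α) (k : ℕ) : #{j | upperRank v j ≤ k} ≤ k := by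
  rcases (univ.filter fun j => upperRank v j ≤ k).eq_empty_or_nonempty with h | h
  · simp [h]
  obtain ⟨j, hj, hmin⟩ := exists_min_image _ v h
  calc #{j | upperRank v j ≤ k} ≤ upperRank v j :=
        card_le_card fun i hi => mem_filter.2 ⟨mem_univ i, hmin i hi⟩
    _ ≤ k := (mem_filter.1 hj).2

theorem upperRank_comp_perm (v : ι → α) (σ : Equiv.Perm ι) (j : ι) :
    upperRank (v ∘ σ) j = upperRank v (σ j) := by
  unfold upperRank
  exact card_bij (fun i _ => σ i) (by simp) (by simp)
    fun i hi => ⟨σ.symm i, by simpa using hi, by simp⟩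

theorem upperRank_last {n : ℕ} (v : Fin (n + 1) → α) :
    upperRank v (Fin.last n) = #{i : Fin n | v (Fin.last n) ≤ v i.castSucc} + 1 := by
  simp only [upperRank, card_filter, Fin.sum_univ_castSucc, le_refl, if_true]

end Rank

theorem measurable_upperRank {ι : Type*} [Fintype ι] (j : ι) :
    Measurable fun v : ι → ℝ => upperRank v j := by
  simp only [upperRank, card_filter]
  exact Finset.measurable_sum _ fun i _ => Measurable.ite
    (measurableSet_le (measurable_pi_apply j) (measurable_pi_apply i))
    measurable_const measurable_const

open Classical in
theorem sum_measure_le_of_forall_card_le {Ω ι : Type*} [MeasurableSpace Ω] [Fintype ι]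
    (μ : Measure Ω) {A : ι → Set Ω} (hA : ∀ j, MeasurableSet (A j)) {k : ℕ}
    (hk : ∀ ω, #{j | ω ∈ A j} ≤ k) : ∑ j, μ (A j) ≤ k * μ Set.univ := by
  calc ∑ j, μ (A j) = ∫⁻ ω, ∑ j, (A j).indicator 1 ω ∂μ := by
        rw [lintegral_finsetSum _ fun j _ => measurable_one.indicator (hA j)]
        exact sum_congr rfl fun j _ => (lintegral_indicator_one (hA j)).symm
    _ = ∫⁻ ω, (#{j | ω ∈ A j} : ℝ≥0∞) ∂μ := by
        simp only [card_filter, Nat.cast_sum, Nat.cast_ite, Nat.cast_one, Nat.cast_zero,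
          Set.indicator_apply, Pi.one_apply]
    _ ≤ ∫⁻ _, (k : ℝ≥0∞) ∂μ := lintegral_mono fun ω => Nat.cast_le.2 (hk ω)
    _ = k * μ Set.univ := lintegral_const _

section Exchangeable

variable {Ω ι : Type*} [MeasurableSpace Ω] (μ : Measure Ω) (X : ι → Ω → ℝ)
  (hmeas : ∀ i, Measurable (X i))
  (hexch : ∀ σ : Equiv.Perm ι,
    Measure.map (fun ω => fun i => X (σ i) ω) μ = Measure.map (fun ω => fun i => X i ω) μ)
include hmeas hexch

theorem measure_preimage_perm_eq (σ : Equiv.Perm ι) {s : Set (ι → ℝ)} (hs : MeasurableSet s) :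
    μ ((fun ω => fun i => X (σ i) ω) ⁻¹' s) = μ ((fun ω => fun i => X i ω) ⁻¹' s) := by
  rw [← Measure.map_apply (measurable_pi_lambda _ fun i => hmeas (σ i)) hs, hexch σ,
    Measure.map_apply (measurable_pi_lambda _ hmeas) hs]

variable [Fintype ι]

theorem measure_upperRank_le_eq (j j' : ι) (k : ℕ) :
    μ {ω | upperRank (fun i => X i ω) j ≤ k} = μ {ω | upperRank (fun i => X i ω) j' ≤ k} := by
  classical
  have hperm : {ω | upperRank (fun i => X i ω) j ≤ k} =
      (fun ω => fun i => X (Equiv.swap j j' i) ω) ⁻¹' {v | upperRank v j' ≤ k} := by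
    ext ω
    change _ ≤ k ↔ upperRank ((fun i => X i ω) ∘ Equiv.swap j j') j' ≤ k
    rw [upperRank_comp_perm, Equiv.swap_apply_right]
  rw [hperm, measure_preimage_perm_eq μ X hmeas hexch _
    (measurableSet_le (measurable_upperRank j') measurable_const)]
  rfl

theorem card_mul_measure_upperRank_le_le [IsProbabilityMeasure μ] (j : ι) (k : ℕ) :
    Fintype.card ι * μ {ω | upperRank (fun i => X i ω) j ≤ k} ≤ k := by
  calc Fintype.card ι * μ {ω | upperRank (fun i => X i ω) j ≤ k}
        = ∑ j', μ {ω | upperRank (fun i => X i ω) j' ≤ k} := by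
          simp [measure_upperRank_le_eq μ X hmeas hexch _ j]
    _ ≤ k * μ Set.univ := by
          refine sum_measure_le_of_forall_card_le μ (fun j' => measurable_pi_lambda _ hmeas
            (measurableSet_le (measurable_upperRank j') measurable_const)) fun ω => ?_
          convert card_upperRank_le_le (fun i => X i ω) k using 3
          rfl
    _ = k := by simp

end Exchangeable

/-- If `S 1, ..., S n, T` are exchangeable real random variables (not necessarily
with a continuous distribution), the conformal p-value `Q = (1 + #{i : S i ≥ T})/(n+1)`
satisfies `P(Q ≤ t) ≤ t` for all `t ∈ [0,1]`. -/
theorem conformal_p_value_super_uniform_exchangeable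
    {Ω : Type*} [MeasurableSpace Ω] (μ : Measure Ω) [IsProbabilityMeasure μ]
    (n : ℕ) (X : Fin (n + 1) → Ω → ℝ)
    (hmeas : ∀ i, Measurable (X i))
    (hexch : ∀ σ : Equiv.Perm (Fin (n + 1)),
      Measure.map (fun ω => fun i => X (σ i) ω) μ = Measure.map (fun ω => fun i => X i ω) μ)
    (S : Fin n → Ω → ℝ) (T : Ω → ℝ)
    (hS : ∀ i : Fin n, S i = X i.castSucc) (hT : T = X (Fin.last n))
    (Q : Ω → ℝ)
    (hQ : ∀ ω, Q ω = (1 + ((univ.filter fun i : Fin n => T ω ≤ S i ω).card : ℝ)) / (n + 1)) :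
    ∀ t ∈ Set.Icc (0 : ℝ) 1, μ {ω | Q ω ≤ t} ≤ ENNReal.ofReal t := by
  rintro t ⟨ht, -⟩
  obtain rfl : S = fun i => X i.castSucc := funext hS
  subst hT
  have hn : (0 : ℝ) < n + 1 := n.cast_add_one_pos
  set k := ⌊t * (n + 1)⌋₊
  have hevent : {ω | Q ω ≤ t} = {ω | upperRank (fun i => X i ω) (Fin.last n) ≤ k} := by
    ext ω
    simp only [Set.mem_ofPred_eq]
    rw [hQ, upperRank_last, div_le_iff₀ hn, Nat.le_floor_iff (by positivity)]
    push_cast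
    rw [add_comm]
  have hbound := card_mul_measure_upperRank_le_le μ X hmeas hexch (Fin.last n) k
  rw [Fintype.card_fin, Nat.cast_add_one] at hbound
  calc μ {ω | Q ω ≤ t} ≤ k / (n + 1) := by
        rw [hevent, ENNReal.le_div_iff_mul_le (by simp) (by simp), mul_comm]
        exact hbound
    _ = ENNReal.ofReal (k / (n + 1)) := by
        rw [ENNReal.ofReal_div_of_pos hn]
        simp [ENNReal.ofReal_add]
    _ ≤ ENNReal.ofReal t :=
        ENNReal.ofReal_le_ofReal ((div_le_iff₀ hn).2 (Nat.floor_le (by positivity)))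
end

section
/- A Beta(a,b) random variable with mean μ = a/(a+b) satisfies, for any ε > 0, P(X ≥ (1+ε)μ) ≤ exp(−2(a+b)ε²μ²) (a Hoeffding-type concentration bound), which implies that for a_n/n → t ∈ (0,1), Beta(a_n, n+1−a_n) concentrates around t. -/
/-!
On `(0, 1)` the `Beta(α + 1, β + 1)` density is `(n + 1) bₙ,α` with `n = α + β` and `bₙ,α` a
Bernstein polynomial. Bernstein polynomials of degree `n + 1` telescope under differentiation, so
`∑_{j ≤ α} bₙ₊₁,ⱼ` is an antiderivative of `-(n + 1) bₙ,α` vanishing at `1`: the upper tail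
`P(X > c)` is the binomial lower tail `P(Bin(n + 1, c) ≤ α)`. Chernoff's method together with
Hoeffding's lemma for a Bernoulli variable bounds that by `exp (-2 ((n + 1) c - α)² / (n + 1))`,
which dominates `exp (-2 (n + 2) (c - m)²)` for the mean `m = (α + 1) / (n + 2)`. The lower tail
follows from the symmetry `X ↦ 1 - X`, which swaps `α` and `β`, and concentration follows from
the two-sided bound since the means `A n / (n + 1)` converge to `t`.
-/

open MeasureTheory Filter

/-- The `Beta(a,b)` distribution on `ℝ`, with density `x^(a-1) (1-x)^(b-1) / B(a,b)` on `(0,1)`. -/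
noncomputable def betaMeasure (a b : ℝ) : Measure ℝ :=
  volume.withDensity fun x =>
    ENNReal.ofReal ((Set.Ioo (0 : ℝ) 1).indicator
      (fun t => t ^ (a - 1) * (1 - t) ^ (b - 1) /
        ∫ s in Set.Ioo (0 : ℝ) 1, s ^ (a - 1) * (1 - s) ^ (b - 1)) x)

open Real Finset Polynomial Topology

open ProbabilityTheory in
theorem bernoulli_mgf_le_exp {p : ℝ} (hp : p ∈ Set.Icc 0 1) (t : ℝ) :
    p * exp t + (1 - p) ≤ exp (t * p + t ^ 2 / 8) := by
  set μ : Measure Bool := bernoulliMeasure true false ⟨p, hp⟩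
  let Y : Bool → ℝ := fun b => if b then 1 else 0
  have hY : HasSubgaussianMGF (fun b => Y b - μ[Y]) ((‖(1 : ℝ) - 0‖₊ / 2) ^ 2) μ :=
    hasSubgaussianMGF_of_mem_Icc (measurable_of_countable Y).aemeasurable
      (ae_of_all _ fun b => by cases b <;> simp [Y])
  have hmean : μ[Y] = p := by simp [μ, Y, integral_bernoulliMeasure]
  have hmgf : p * exp (t * (1 - p)) + (1 - p) * exp (-(t * p)) ≤ exp (t ^ 2 / 8) := by
    have := hY.mgf_le t
    simp only [mgf, μ, integral_bernoulliMeasure, hmean] at this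
    norm_num [Y] at this
    exact this.trans_eq (by ring_nf)
  calc p * exp t + (1 - p)
      = exp (t * p) * (p * exp (t * (1 - p)) + (1 - p) * exp (-(t * p))) := by
        rw [mul_add, mul_left_comm, ← exp_add, mul_left_comm, ← exp_add, add_neg_cancel,
          exp_zero]
        ring_nf
    _ ≤ exp (t * p) * exp (t ^ 2 / 8) := by gcongr
    _ = exp (t * p + t ^ 2 / 8) := (exp_add _ _).symm

theorem sum_bernsteinPolynomial_eval_le_exp {N k : ℕ} {p : ℝ} (hp : p ∈ Set.Icc 0 1)
    (hk : (k : ℝ) ≤ N * p) :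
    ∑ j ∈ range (k + 1), (bernsteinPolynomial ℝ N j).eval p ≤ exp (-2 * (N * p - k) ^ 2 / N) := by
  have hb_nonneg (j : ℕ) : 0 ≤ (bernsteinPolynomial ℝ N j).eval p := bernstein_nonneg (x := ⟨p, hp⟩)
  have hkN : k ≤ N := by exact_mod_cast hk.trans (mul_le_of_le_one_right N.cast_nonneg hp.2)
  -- the minimiser of the Chernoff exponent `l k - N l p + N l² / 8`
  set l := 4 * (N * p - k) / N
  have hl : 0 ≤ l := by have := sub_nonneg.2 hk; positivity
  have hchernoff : ∑ j ∈ range (k + 1), (bernsteinPolynomial ℝ N j).eval p ≤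
      ∑ j ∈ range (N + 1), exp (l * (k - j)) * (bernsteinPolynomial ℝ N j).eval p := by
    calc _ ≤ ∑ j ∈ range (k + 1), exp (l * (k - j)) * (bernsteinPolynomial ℝ N j).eval p := by
          refine sum_le_sum fun j hj => le_mul_of_one_le_left (hb_nonneg j) (one_le_exp ?_)
          have : (j : ℝ) ≤ k := by exact_mod_cast Nat.lt_succ_iff.1 (mem_range.1 hj)
          exact mul_nonneg hl (sub_nonneg.2 this)
      _ ≤ _ := sum_le_sum_of_subset_of_nonneg (range_subset_range.2 (by omega))
          fun j _ _ => mul_nonneg (exp_pos _).le (hb_nonneg j)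
  have hmgf : ∑ j ∈ range (N + 1), exp (l * (k - j)) * (bernsteinPolynomial ℝ N j).eval p
      = exp (l * k) * (p * exp (-l) + (1 - p)) ^ N := by
    rw [add_pow, mul_sum]
    refine sum_congr rfl fun j _ => ?_
    simp only [bernsteinPolynomial, eval_mul, eval_pow, eval_sub, eval_one, eval_X, eval_natCast]
    rw [mul_pow, ← exp_nat_mul, mul_sub, exp_sub, div_eq_mul_inv, ← exp_neg]
    ring_nf
  calc _ ≤ exp (l * k) * (p * exp (-l) + (1 - p)) ^ N := hmgf ▸ hchernoff
    _ ≤ exp (l * k) * exp (-l * p + (-l) ^ 2 / 8) ^ N := by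
        gcongr
        · have := hp.1; have := sub_nonneg.2 hp.2; positivity
        · exact bernoulli_mgf_le_exp hp (-l)
    _ = exp (-2 * (N * p - k) ^ 2 / N) := by
        rw [← exp_nat_mul, ← exp_add]
        congr 1
        rcases N.eq_zero_or_pos with rfl | hN
        · simp [l]
        · simp only [l]; field_simp; ring

theorem derivative_sum_range_bernsteinPolynomial {R : Type*} [CommRing R] (n k : ℕ) :
    derivative (∑ j ∈ range (k + 1), bernsteinPolynomial R (n + 1) j) =
      -((n + 1) * bernsteinPolynomial R n k) := by
  induction k with
  | zero =>
    rw [zero_add, range_one, sum_singleton, bernsteinPolynomial.derivative_zero,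
      add_tsub_cancel_right]
    push_cast
    ring
  | succ k ih =>
    rw [sum_range_succ, derivative_add, ih, bernsteinPolynomial.derivative_succ_aux]
    ring

theorem integral_bernsteinPolynomial_eval {n k : ℕ} (hk : k ≤ n) (c : ℝ) :
    ∫ x in c..1, (n + 1) * (bernsteinPolynomial ℝ n k).eval x =
      ∑ j ∈ range (k + 1), (bernsteinPolynomial ℝ (n + 1) j).eval c := by
  set F := ∑ j ∈ range (k + 1), bernsteinPolynomial ℝ (n + 1) j
  have hF (x : ℝ) :
      HasDerivAt (fun x => (-F).eval x) ((n + 1) * (bernsteinPolynomial ℝ n k).eval x) x := by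
    simpa only [F, derivative_neg, derivative_sum_range_bernsteinPolynomial, neg_neg, eval_mul,
      eval_add, eval_natCast, eval_one] using (-F).hasDerivAt x
  have hF1 : F.eval 1 = 0 := by
    simp only [F, eval_finsetSum, bernsteinPolynomial.eval_at_1]
    exact sum_eq_zero fun j hj => if_neg (by have := mem_range.1 hj; omega)
  rw [intervalIntegral.integral_eq_sub_of_hasDerivAt (fun x _ => hF x)
    ((by fun_prop : Continuous _).intervalIntegrable _ _)]
  simp [hF1, F, eval_finsetSum]

theorem integral_Ioo_bernsteinPolynomial_eval {n k : ℕ} (hk : k ≤ n) :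
    ∫ x in Set.Ioo 0 1, (bernsteinPolynomial ℝ n k).eval x = 1 / (n + 1) := by
  have h := integral_bernsteinPolynomial_eval hk 0
  simp only [bernsteinPolynomial.eval_at_0, sum_ite_eq', mem_range, Nat.zero_lt_succ, ite_true,
    intervalIntegral.integral_const_mul] at h
  rw [← integral_Ioc_eq_integral_Ioo, ← intervalIntegral.integral_of_le zero_le_one]
  field_simp
  linarith

theorem betaMeasure_natCast_add_one (α β : ℕ) :
    betaMeasure (α + 1) (β + 1) = volume.withDensity fun x => ENNReal.ofReal
      ((Set.Ioo 0 1).indicator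
        (fun x => (α + β + 1) * (bernsteinPolynomial ℝ (α + β) α).eval x) x) := by
  have hchoose := (Nat.choose_pos (Nat.le_add_right α β)).ne'
  have hpow (x : ℝ) : x ^ ((α : ℝ) + 1 - 1) * (1 - x) ^ ((β : ℝ) + 1 - 1) =
      (bernsteinPolynomial ℝ (α + β) α).eval x / (α + β).choose α := by
    simp only [add_sub_cancel_right, rpow_natCast, bernsteinPolynomial, add_tsub_cancel_left,
      eval_mul, eval_natCast, eval_pow, eval_X, eval_sub, eval_one]
    field_simp
  have hZ : ∫ x in Set.Ioo (0 : ℝ) 1,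
      (bernsteinPolynomial ℝ (α + β) α).eval x / (α + β).choose α =
        1 / ((α + β + 1) * (α + β).choose α) := by
    rw [integral_div, integral_Ioo_bernsteinPolynomial_eval (Nat.le_add_right α β)]
    push_cast; field_simp
  simp only [betaMeasure, hpow, hZ]
  congr! 4 with x
  ext t
  field_simp

theorem betaMeasure_natCast_add_one_apply (α β : ℕ) {s : Set ℝ} (hs : MeasurableSet s) :
    betaMeasure (α + 1) (β + 1) s = ENNReal.ofReal
      (∫ x in s ∩ Set.Ioo 0 1, (α + β + 1) * (bernsteinPolynomial ℝ (α + β) α).eval x) := by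
  have hf : IntegrableOn (fun x => (α + β + 1) * (bernsteinPolynomial ℝ (α + β) α).eval x)
      (Set.Ioo 0 1) :=
    (Continuous.integrableOn_Icc (by fun_prop)).mono_set Set.Ioo_subset_Icc_self
  rw [betaMeasure_natCast_add_one, withDensity_apply _ hs, ← ofReal_integral_eq_lintegral_ofReal,
    integral_indicator measurableSet_Ioo, Measure.restrict_restrict measurableSet_Ioo,
    Set.inter_comm]
  · exact ((integrable_indicator_iff measurableSet_Ioo).2 hf).integrableOn
  · refine ae_of_all _ fun x => Set.indicator_nonneg (fun x hx => ?_) x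
    have : 0 ≤ (bernsteinPolynomial ℝ (α + β) α).eval x :=
      bernstein_nonneg (x := ⟨x, Set.Ioo_subset_Icc_self hx⟩)
    positivity

theorem betaMeasure_natCast_add_one_Ioi (α β : ℕ) {c : ℝ} (hc : c ∈ Set.Icc 0 1) :
    betaMeasure (α + 1) (β + 1) (Set.Ioi c) = ENNReal.ofReal
      (∑ j ∈ range (α + 1), (bernsteinPolynomial ℝ (α + β + 1) j).eval c) := by
  have hset : Set.Ioi c ∩ Set.Ioo 0 1 = Set.Ioo c 1 := by
    ext x; simp only [Set.mem_inter_iff, Set.mem_Ioi, Set.mem_Ioo]; grind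
  rw [betaMeasure_natCast_add_one_apply _ _ measurableSet_Ioi, hset,
    ← integral_Ioc_eq_integral_Ioo, ← intervalIntegral.integral_of_le hc.2]
  exact_mod_cast congrArg ENNReal.ofReal
    (integral_bernsteinPolynomial_eval (Nat.le_add_right α β) c)

theorem betaMeasure_natCast_add_one_Ioi_one (α β : ℕ) :
    betaMeasure (α + 1) (β + 1) (Set.Ioi 1) = 0 := by
  rw [betaMeasure_natCast_add_one_Ioi α β ⟨zero_le_one, le_rfl⟩, ENNReal.ofReal_eq_zero]
  simp only [bernsteinPolynomial.eval_at_1]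
  exact (sum_eq_zero fun j hj => if_neg (by have := mem_range.1 hj; omega)).le

theorem betaMeasure_natCast_add_one_Iio (α β : ℕ) {c : ℝ} (hc : c ∈ Set.Icc 0 1) :
    betaMeasure (α + 1) (β + 1) (Set.Iio c) = betaMeasure (β + 1) (α + 1) (Set.Ioi (1 - c)) := by
  have hset : Set.Ioi (1 - c) ∩ Set.Ioo 0 1 = Set.Ioo (1 - c) 1 := by
    ext x; simp only [Set.mem_inter_iff, Set.mem_Ioi, Set.mem_Ioo]; grind
  have hflip (x : ℝ) : (bernsteinPolynomial ℝ (β + α) β).eval (1 - x) =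
      (bernsteinPolynomial ℝ (α + β) α).eval x := by
    simpa [eval_comp, add_comm β α] using
      congrArg (eval x) (bernsteinPolynomial.flip ℝ (β + α) β (Nat.le_add_right β α))
  rw [betaMeasure_natCast_add_one_apply _ _ measurableSet_Iio,
    betaMeasure_natCast_add_one_apply _ _ measurableSet_Ioi, Set.Iio_inter_Ioo, min_eq_left hc.2,
    hset, ← integral_Ioc_eq_integral_Ioo, ← integral_Ioc_eq_integral_Ioo,
    ← intervalIntegral.integral_of_le hc.1, ← intervalIntegral.integral_of_le (by linarith [hc.1])]
  have := intervalIntegral.integral_comp_sub_left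
    (fun x => ((β : ℝ) + α + 1) * (bernsteinPolynomial ℝ (β + α) β).eval x) (a := 0) (b := c) 1
  simp only [hflip, sub_zero] at this
  rw [← this, add_comm (β : ℝ)]

theorem betaMeasure_Ici (a b c : ℝ) : betaMeasure a b (Set.Ici c) = betaMeasure a b (Set.Ioi c) :=
  measure_congr ((withDensity_absolutelyContinuous _ _).ae_eq Ioi_ae_eq_Ici).symm

/-- Hoeffding's bound for `Bin(N, c)` loses a factor `N / (N + 1)` in the exponent, which the gap
between `k / N` and the mean `(k + 1) / (N + 1)` recovers. -/
theorem sq_sub_mean_le_sq_sub_div {N k c : ℝ} (hN : 0 < N) (hc : (k + 1) / (N + 1) ≤ c)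
    (hc1 : c ≤ 1) :
    (N + 1) * (c - (k + 1) / (N + 1)) ^ 2 ≤ (N * c - k) ^ 2 / N := by
  set d := c - (k + 1) / (N + 1)
  set e := 1 - (k + 1) / (N + 1)
  have hd : 0 ≤ d := sub_nonneg.2 hc
  have hde : d ≤ e := by simp only [d, e]; linarith
  have hsplit : N * c - k = N * d + e := by simp only [d, e]; field_simp; ring
  rw [le_div_iff₀ hN, hsplit]
  nlinarith [mul_le_mul_of_nonneg_left hde (mul_nonneg hN.le hd), sq_nonneg e]

theorem betaMeasure_natCast_add_one_Ioi_le (α β : ℕ) {c : ℝ} (hc : (α + 1) / (α + β + 2) ≤ c) :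
    betaMeasure (α + 1) (β + 1) (Set.Ioi c) ≤
      ENNReal.ofReal (exp (-2 * (α + β + 2) * (c - (α + 1) / (α + β + 2)) ^ 2)) := by
  rcases le_or_gt c 1 with hc1 | hc1
  · have hc0 : 0 ≤ c := le_trans (by positivity) hc
    rw [betaMeasure_natCast_add_one_Ioi α β ⟨hc0, hc1⟩]
    refine ENNReal.ofReal_le_ofReal ((sum_bernsteinPolynomial_eval_le_exp ⟨hc0, hc1⟩ ?_).trans ?_)
    · rw [div_le_iff₀ (by positivity)] at hc
      push_cast
      linarith
    · have key := sq_sub_mean_le_sq_sub_div (N := α + β + 1) (k := α) (by positivity)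
        (by convert hc using 2; ring) hc1
      rw [show (α : ℝ) + β + 1 + 1 = α + β + 2 by ring] at key
      rw [exp_le_exp]
      push_cast
      linear_combination 2 * key
  · calc _ ≤ betaMeasure (α + 1) (β + 1) (Set.Ioi 1) := measure_mono (Set.Ioi_subset_Ioi hc1.le)
      _ = 0 := betaMeasure_natCast_add_one_Ioi_one α β
      _ ≤ _ := zero_le

theorem betaMeasure_natCast_add_one_Iio_le (α β : ℕ) {c : ℝ} (hc : c ≤ (α + 1) / (α + β + 2)) :
    betaMeasure (α + 1) (β + 1) (Set.Iio c) ≤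
      ENNReal.ofReal (exp (-2 * (α + β + 2) * ((α + 1) / (α + β + 2) - c) ^ 2)) := by
  have hswap : (β + 1 : ℝ) / (β + α + 2) = 1 - (α + 1) / (α + β + 2) := by field_simp; ring
  rcases le_or_gt 0 c with hc0 | hc0
  · have hc1 : c ≤ 1 := hc.trans (div_le_one_of_le₀ (by linarith) (by positivity))
    have hexp : -2 * (β + α + 2) * (1 - c - (β + 1) / (β + α + 2)) ^ 2 =
        -2 * (α + β + 2) * ((α + 1) / (α + β + 2) - c) ^ 2 := by
      rw [hswap]; ring
    rw [betaMeasure_natCast_add_one_Iio α β ⟨hc0, hc1⟩, ← hexp]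
    exact betaMeasure_natCast_add_one_Ioi_le β α (by rw [hswap]; linarith)
  · calc _ ≤ betaMeasure (α + 1) (β + 1) (Set.Iio 0) := measure_mono (Set.Iio_subset_Iio hc0.le)
      _ = 0 := by
        rw [betaMeasure_natCast_add_one_Iio α β ⟨le_rfl, zero_le_one⟩, sub_zero,
          betaMeasure_natCast_add_one_Ioi_one]
      _ ≤ _ := zero_le

theorem betaMeasure_natCast_add_one_abs_sub_mean_gt_le (α β : ℕ) {r : ℝ} (hr : 0 ≤ r) :
    betaMeasure (α + 1) (β + 1) {x | r < |x - (α + 1) / (α + β + 2)|} ≤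
      2 * ENNReal.ofReal (exp (-2 * (α + β + 2) * r ^ 2)) := by
  set m : ℝ := (α + 1) / (α + β + 2) with hm
  have hset : {x | r < |x - m|} = Set.Ioi (m + r) ∪ Set.Iio (m - r) := by
    ext x; simp only [Set.mem_ofPred_eq, lt_abs, Set.mem_union, Set.mem_Ioi, Set.mem_Iio]; grind
  rw [hset, two_mul]
  refine (measure_union_le _ _).trans (add_le_add ?_ ?_)
  · have h := betaMeasure_natCast_add_one_Ioi_le α β (c := m + r) (by linarith)
    rwa [← hm, add_sub_cancel_left] at h
  · have h := betaMeasure_natCast_add_one_Iio_le α β (c := m - r) (by linarith)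
    rwa [← hm, sub_sub_cancel] at h

theorem betaMeasure_natCast_abs_sub_gt_le {n k : ℕ} (hk : 1 ≤ k) (hkn : k ≤ n) {t δ r : ℝ}
    (hr : 0 ≤ r) (hclose : |k / (n + 1) - t| + r ≤ δ) :
    betaMeasure k (n + 1 - k) {x | δ < |x - t|} ≤
      2 * ENNReal.ofReal (exp (-2 * (n + 1) * r ^ 2)) := by
  obtain ⟨α, rfl⟩ : ∃ α, k = α + 1 := ⟨k - 1, by omega⟩
  obtain ⟨β, rfl⟩ : ∃ β, n = α + β + 1 := ⟨n - (α + 1), by omega⟩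
  have hN : ((α + β + 1 : ℕ) : ℝ) + 1 = α + β + 2 := by push_cast; ring
  have hsub : {x : ℝ | δ < |x - t|} ⊆ {x | r < |x - (α + 1) / (α + β + 2)|} := by
    intro x hx
    have := abs_sub_le x ((α + 1) / (α + β + 2)) t
    rw [hN] at hclose
    push_cast at hclose
    simp only [Set.mem_ofPred_eq] at hx ⊢
    linarith
  rw [hN, show (α + β + 2 : ℝ) - ((α + 1 : ℕ) : ℝ) = β + 1 by push_cast; ring]
  push_cast
  exact (measure_mono hsub).trans (betaMeasure_natCast_add_one_abs_sub_mean_gt_le α β hr)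

theorem tendsto_betaMeasure_abs_sub_gt {t δ : ℝ} (ht : t < 1) (hδ : 0 < δ) {A : ℕ → ℕ}
    (hA : ∀ n, 1 ≤ A n) (hlim : Tendsto (fun n : ℕ => (A n : ℝ) / n) atTop (𝓝 t)) :
    Tendsto (fun n : ℕ => betaMeasure (A n) ((n : ℝ) + 1 - (A n : ℝ)) {x | δ < |x - t|})
      atTop (𝓝 0) := by
  have hmean : Tendsto (fun n : ℕ => (A n : ℝ) / (n + 1)) atTop (𝓝 t) := by
    have := hlim.mul (tendsto_natCast_div_add_atTop (1 : ℝ))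
    rw [mul_one] at this
    refine this.congr' ((eventually_ne_atTop 0).mono fun n hn => ?_)
    have : (n : ℝ) ≠ 0 := Nat.cast_ne_zero.2 hn
    field_simp
  have hAn : ∀ᶠ n in atTop, A n ≤ n := by
    filter_upwards [hlim.eventually_lt_const ht, eventually_gt_atTop 0] with n hlt hn
    exact_mod_cast ((div_lt_one (Nat.cast_pos.2 hn)).1 hlt).le
  have hbound : ∀ᶠ n : ℕ in atTop, betaMeasure (A n) ((n : ℝ) + 1 - (A n : ℝ)) {x | δ < |x - t|}
      ≤ 2 * ENNReal.ofReal (exp (-2 * (n + 1) * (δ / 2) ^ 2)) := by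
    filter_upwards [hAn, hmean.eventually (eventually_abs_sub_lt t (half_pos hδ))]
      with n hAn hclose
    exact betaMeasure_natCast_abs_sub_gt_le (hA n) hAn (half_pos hδ).le (by linarith)
  have hlim0 : Tendsto (fun n : ℕ => 2 * ENNReal.ofReal (exp (-2 * (n + 1) * (δ / 2) ^ 2)))
      atTop (𝓝 0) := by
    have hexp : Tendsto (fun n : ℕ => -2 * ((n : ℝ) + 1) * (δ / 2) ^ 2) atTop atBot :=
      ((tendsto_natCast_atTop_atTop.atTop_add tendsto_const_nhds).const_mul_atTop_of_neg
        (by norm_num)).atBot_mul_const (by positivity)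
    simpa using ENNReal.Tendsto.const_mul
      (ENNReal.tendsto_ofReal (tendsto_exp_atBot.comp hexp)) (Or.inr ENNReal.ofNat_ne_top)
  exact tendsto_of_tendsto_of_tendsto_of_le_of_le' tendsto_const_nhds hlim0
    (Eventually.of_forall fun n => zero_le) hbound

/-- A `Beta(a,b)` random variable (integer parameters) with mean `m = a/(a+b)`
satisfies the Hoeffding-type bound `P(X ≥ (1+ε)m) ≤ exp(−2(a+b)ε²m²)` for any `ε > 0`; this
implies that for `aₙ/n → t ∈ (0,1)`, `Beta(aₙ, n+1−aₙ)` concentrates around `t`. -/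
theorem beta_hoeffding_concentration
    (a b : ℕ) (ha : 1 ≤ a) (hb : 1 ≤ b) (ε : ℝ) (hε : 0 < ε)
    (m : ℝ) (hm : m = (a : ℝ) / (a + b)) :
    betaMeasure a b {x | (1 + ε) * m ≤ x}
        ≤ ENNReal.ofReal (Real.exp (-2 * ((a : ℝ) + b) * ε ^ 2 * m ^ 2)) ∧
      ∀ t ∈ Set.Ioo (0 : ℝ) 1, ∀ A : ℕ → ℕ, (∀ n, 1 ≤ A n) →
        Tendsto (fun n : ℕ => (A n : ℝ) / n) atTop (nhds t) →
        ∀ δ > 0,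
          Tendsto (fun n : ℕ => betaMeasure (A n) ((n : ℝ) + 1 - (A n : ℝ)) {x | δ < |x - t|})
            atTop (nhds 0) := by
  refine ⟨?_, fun t ht A hA hlim δ hδ => tendsto_betaMeasure_abs_sub_gt ht.2 hδ hA hlim⟩
  obtain ⟨α, rfl⟩ : ∃ α, a = α + 1 := ⟨a - 1, by omega⟩
  obtain ⟨β, rfl⟩ : ∃ β, b = β + 1 := ⟨b - 1, by omega⟩
  have hmean : m = (α + 1) / (α + β + 2) := by rw [hm]; push_cast; ring
  have hm0 : 0 < m := by rw [hmean]; positivity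
  have hexp : -2 * (((α + 1 : ℕ) : ℝ) + ((β + 1 : ℕ) : ℝ)) * ε ^ 2 * m ^ 2 =
      -2 * (α + β + 2) * ((1 + ε) * m - (α + 1) / (α + β + 2)) ^ 2 := by
    rw [← hmean]; push_cast; ring
  rw [hexp, show {x : ℝ | (1 + ε) * m ≤ x} = Set.Ici ((1 + ε) * m) from rfl]
  push_cast
  rw [betaMeasure_Ici]
  exact betaMeasure_natCast_add_one_Ioi_le α β (by rw [← hmean]; nlinarith)
end
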